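/- arXiv:2605.06212 — 3 statements merged into one kernel-verified Lean document; each statement's English description precedes it below -/
import Mathlib

section
/- For every z ∈ ℝ, the regularised maximisation max_{π ∈ [0,1]} { π·z + φ(Φ⁻¹(π)) } has the unique maximiser π* = Φ(z), and the optimal value equals z·Φ(z) + φ(z), where Φ is the standard normal CDF and φ is the standard normal density. -/
noncomputable section

/-- Standard normal density `φ`. -/
def stdGaussPDF (y : ℝ) : ℝ := (Real.sqrt (2 * Real.pi))⁻¹ * Real.exp (-(y ^ 2) / 2)

/-- Standard normal CDF `Φ`. -/
def stdGaussCDF (z : ℝ) : ℝ := ∫ y in Set.Iic z, stdGaussPDF y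

/-- Quantile function `Φ⁻¹` (left inverse of `Φ` on `(0,1)`). -/
def stdGaussQuantile : ℝ → ℝ := Function.invFun stdGaussCDF

/-- Probit regulariser `H_Φ(p) = φ(Φ⁻¹(p))` on `(0,1)`, extended by `0` at the endpoints. -/
def probitReg (p : ℝ) : ℝ :=
  if p ≤ 0 ∨ 1 ≤ p then 0 else stdGaussPDF (stdGaussQuantile p)

/-!
On `(0, 1)` substitute `p = Φ(y)`: since `Φ⁻¹(Φ(y)) = y`, the objective becomes
`g(y) = z Φ(y) + φ(y)`, and `g'(y) = (z - y) φ(y)` because `φ' = -y φ`. Hence `g` increases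
strictly up to `y = z` and decreases strictly afterwards. The endpoints `p = 0` and `p = 1` give
the values `0 = lim_{y → -∞} g(y)` and `z = lim_{y → ∞} g(y)`, which by the same monotonicity lie
strictly below `g(z)`.
-/

open Real MeasureTheory ProbabilityTheory Set Filter Topology

lemma stdGaussPDF_eq_gaussianPDFReal : stdGaussPDF = gaussianPDFReal 0 1 := by
  ext y
  simp [stdGaussPDF, gaussianPDFReal]

lemma stdGaussPDF_pos (y : ℝ) : 0 < stdGaussPDF y := by
  rw [stdGaussPDF_eq_gaussianPDFReal]
  exact gaussianPDFReal_pos _ _ _ one_ne_zero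

lemma integrable_stdGaussPDF : Integrable stdGaussPDF := by
  rw [stdGaussPDF_eq_gaussianPDFReal]
  exact integrable_gaussianPDFReal _ _

lemma continuous_stdGaussPDF : Continuous stdGaussPDF := by
  unfold stdGaussPDF
  fun_prop

lemma hasDerivAt_stdGaussPDF (y : ℝ) : HasDerivAt stdGaussPDF (-y * stdGaussPDF y) y := by
  have h := (((hasDerivAt_pow 2 y).fun_neg.div_const 2).exp).const_mul (√(2 * π))⁻¹
  exact h.congr_deriv (by simp only [stdGaussPDF]; norm_num; ring)

lemma tendsto_stdGaussPDF_cocompact : Tendsto stdGaussPDF (cocompact ℝ) (𝓝 0) := by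
  have h := (tendsto_rpow_abs_mul_exp_neg_mul_sq_cocompact one_half_pos 0).const_mul (√(2 * π))⁻¹
  convert h using 2 with y
  · simp only [stdGaussPDF, rpow_zero, one_mul]
    ring_nf
  · simp

lemma stdGaussCDF_eq_cdf : stdGaussCDF = cdf (gaussianReal 0 1) := by
  ext z
  rw [cdf_eq_real, measureReal_def, gaussianReal_apply_eq_integral _ one_ne_zero,
    ENNReal.toReal_ofReal (setIntegral_nonneg measurableSet_Iic
      fun y _ => gaussianPDFReal_nonneg _ _ _), stdGaussCDF, stdGaussPDF_eq_gaussianPDFReal]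

lemma hasDerivAt_stdGaussCDF (z : ℝ) : HasDerivAt stdGaussCDF (stdGaussPDF z) z := by
  have hΦ : stdGaussCDF = fun x => stdGaussCDF 0 + ∫ y in (0 : ℝ)..x, stdGaussPDF y := by
    ext x
    rw [← intervalIntegral.integral_Iic_sub_Iic integrable_stdGaussPDF.integrableOn
      integrable_stdGaussPDF.integrableOn, stdGaussCDF, stdGaussCDF]
    ring
  rw [hΦ]
  exact (intervalIntegral.integral_hasDerivAt_right integrable_stdGaussPDF.intervalIntegrable
    (continuous_stdGaussPDF.stronglyMeasurableAtFilter _ _)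
    continuous_stdGaussPDF.continuousAt).const_add _

lemma continuous_stdGaussCDF : Continuous stdGaussCDF :=
  continuous_iff_continuousAt.2 fun z => (hasDerivAt_stdGaussCDF z).continuousAt

lemma strictMono_stdGaussCDF : StrictMono stdGaussCDF :=
  strictMono_of_hasDerivAt_pos hasDerivAt_stdGaussCDF stdGaussPDF_pos

lemma tendsto_stdGaussCDF_atBot : Tendsto stdGaussCDF atBot (𝓝 0) :=
  stdGaussCDF_eq_cdf ▸ tendsto_cdf_atBot _

lemma tendsto_stdGaussCDF_atTop : Tendsto stdGaussCDF atTop (𝓝 1) :=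
  stdGaussCDF_eq_cdf ▸ tendsto_cdf_atTop _

lemma stdGaussCDF_mem_Ioo (z : ℝ) : stdGaussCDF z ∈ Ioo 0 1 :=
  ⟨(strictMono_stdGaussCDF.monotone.le_of_tendsto tendsto_stdGaussCDF_atBot (z - 1)).trans_lt
      (strictMono_stdGaussCDF (sub_one_lt z)),
    (strictMono_stdGaussCDF (lt_add_one z)).trans_le
      (strictMono_stdGaussCDF.monotone.ge_of_tendsto tendsto_stdGaussCDF_atTop (z + 1))⟩

lemma range_stdGaussCDF : range stdGaussCDF = Ioo 0 1 := by
  refine (range_subset_iff.2 stdGaussCDF_mem_Ioo).antisymm fun p hp => ?_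
  exact mem_range_of_exists_le_of_exists_ge continuous_stdGaussCDF
    (tendsto_stdGaussCDF_atBot.eventually_le_const hp.1).exists
    (tendsto_stdGaussCDF_atTop.eventually_const_le hp.2).exists

lemma stdGaussQuantile_stdGaussCDF (y : ℝ) : stdGaussQuantile (stdGaussCDF y) = y :=
  Function.leftInverse_invFun strictMono_stdGaussCDF.injective y

lemma probitReg_stdGaussCDF (y : ℝ) : probitReg (stdGaussCDF y) = stdGaussPDF y := by
  obtain ⟨h0, h1⟩ := stdGaussCDF_mem_Ioo y
  rw [probitReg, if_neg (not_or.2 ⟨h0.not_ge, h1.not_ge⟩), stdGaussQuantile_stdGaussCDF]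

theorem StrictMonoOn.lt_of_tendsto_atBot {α β : Type*} [LinearOrder α] [NoMinOrder α]
    [LinearOrder β] [TopologicalSpace β] [ClosedIicTopology β] {g : α → β} {a : α} {L : β}
    (hg : StrictMonoOn g (Iic a)) (hL : Tendsto g atBot (𝓝 L)) : L < g a := by
  have : Nonempty α := ⟨a⟩
  obtain ⟨b, hba⟩ := exists_lt a
  refine (le_of_tendsto hL ?_).trans_lt (hg hba.le le_rfl hba)
  filter_upwards [eventually_le_atBot b] with y hyb
  exact hg.monotoneOn (hyb.trans hba.le) hba.le hyb

theorem StrictAntiOn.lt_of_tendsto_atTop {α β : Type*} [LinearOrder α] [NoMaxOrder α]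
    [LinearOrder β] [TopologicalSpace β] [ClosedIicTopology β] {g : α → β} {a : α} {L : β}
    (hg : StrictAntiOn g (Ici a)) (hL : Tendsto g atTop (𝓝 L)) : L < g a := by
  have : Nonempty α := ⟨a⟩
  obtain ⟨b, hab⟩ := exists_gt a
  refine (le_of_tendsto hL ?_).trans_lt (hg le_rfl hab.le hab)
  filter_upwards [eventually_ge_atTop b] with y hby
  exact hg.antitoneOn hab.le (hab.le.trans hby) hby

def probitObjective (z y : ℝ) : ℝ := z * stdGaussCDF y + stdGaussPDF y

lemma continuous_probitObjective (z : ℝ) : Continuous (probitObjective z) :=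
  (continuous_const.mul continuous_stdGaussCDF).add continuous_stdGaussPDF

lemma hasDerivAt_probitObjective (z y : ℝ) :
    HasDerivAt (probitObjective z) ((z - y) * stdGaussPDF y) y :=
  (((hasDerivAt_stdGaussCDF y).const_mul z).add (hasDerivAt_stdGaussPDF y)).congr_deriv
    (by ring)

lemma strictMonoOn_probitObjective (z : ℝ) : StrictMonoOn (probitObjective z) (Iic z) := by
  refine strictMonoOn_of_hasDerivWithinAt_pos (convex_Iic z)
    (continuous_probitObjective z).continuousOn
    (fun y _ => (hasDerivAt_probitObjective z y).hasDerivWithinAt) fun y hy => ?_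
  rw [interior_Iic] at hy
  exact mul_pos (sub_pos.2 hy) (stdGaussPDF_pos y)

lemma strictAntiOn_probitObjective (z : ℝ) : StrictAntiOn (probitObjective z) (Ici z) := by
  refine strictAntiOn_of_hasDerivWithinAt_neg (convex_Ici z)
    (continuous_probitObjective z).continuousOn
    (fun y _ => (hasDerivAt_probitObjective z y).hasDerivWithinAt) fun y hy => ?_
  rw [interior_Ici] at hy
  exact mul_neg_of_neg_of_pos (sub_neg.2 hy) (stdGaussPDF_pos y)

lemma probitObjective_lt_of_ne {z y : ℝ} (hyz : y ≠ z) :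
    probitObjective z y < probitObjective z z := by
  rcases hyz.lt_or_gt with hyz | hzy
  · exact strictMonoOn_probitObjective z hyz.le self_mem_Iic hyz
  · exact strictAntiOn_probitObjective z self_mem_Ici hzy.le hzy

lemma zero_lt_probitObjective (z : ℝ) : 0 < probitObjective z z := by
  refine (strictMonoOn_probitObjective z).lt_of_tendsto_atBot ?_
  unfold probitObjective
  simpa using (tendsto_stdGaussCDF_atBot.const_mul z).add
    (tendsto_stdGaussPDF_cocompact.mono_left atBot_le_cocompact)

lemma lt_probitObjective (z : ℝ) : z < probitObjective z z := by
  refine (strictAntiOn_probitObjective z).lt_of_tendsto_atTop ?_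
  unfold probitObjective
  simpa using (tendsto_stdGaussCDF_atTop.const_mul z).add
    (tendsto_stdGaussPDF_cocompact.mono_left atTop_le_cocompact)

lemma mul_add_probitReg_lt {z p : ℝ} (hp : p ∈ Icc 0 1) (hpz : p ≠ stdGaussCDF z) :
    p * z + probitReg p < probitObjective z z := by
  rcases hp.1.eq_or_lt with rfl | hp0
  · simpa [probitReg] using zero_lt_probitObjective z
  rcases hp.2.eq_or_lt with rfl | hp1
  · simpa [probitReg] using lt_probitObjective z
  obtain ⟨y, rfl⟩ : p ∈ range stdGaussCDF := range_stdGaussCDF ▸ ⟨hp0, hp1⟩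
  rw [probitReg_stdGaussCDF, mul_comm]
  exact probitObjective_lt_of_ne (ne_of_apply_ne stdGaussCDF hpz)

/-- The probit-regularised maximisation `max_{p ∈ [0,1]} { p·z + φ(Φ⁻¹(p)) }` has the unique
maximiser `p* = Φ(z)` and optimal value `z·Φ(z) + φ(z)`. -/
theorem probit_regularised_max (z : ℝ) :
    let f : ℝ → ℝ := fun p => p * z + probitReg p
    stdGaussCDF z ∈ Set.Icc (0 : ℝ) 1 ∧
    f (stdGaussCDF z) = z * stdGaussCDF z + stdGaussPDF z ∧
    IsMaxOn f (Set.Icc (0 : ℝ) 1) (stdGaussCDF z) ∧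
    (∀ p ∈ Set.Icc (0 : ℝ) 1, f p = f (stdGaussCDF z) → p = stdGaussCDF z) := by
  intro f
  have hvalue : f (stdGaussCDF z) = probitObjective z z := by
    simp only [f, probitReg_stdGaussCDF, probitObjective, mul_comm]
  have hlt : ∀ p ∈ Icc (0 : ℝ) 1, p ≠ stdGaussCDF z → f p < f (stdGaussCDF z) :=
    fun p hp hpz => hvalue ▸ mul_add_probitReg_lt hp hpz
  refine ⟨Ioo_subset_Icc_self (stdGaussCDF_mem_Ioo z), hvalue, isMaxOn_iff.2 fun p hp => ?_,
    fun p hp hfp => by_contra fun hpz => (hlt p hp hpz).ne hfp⟩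
  rcases eq_or_ne p (stdGaussCDF z) with rfl | hpz
  exacts [le_rfl, (hlt p hp hpz).le]

end
end

section
/- Consider the same paired-activation setting as the Stopping decomposition, but update by the Mixing rule with parameter η ∈ [0,1]: a^{(l,+)}_i = η·max(z^{(l,+)}_i, z^{(l,-)}_i) + (1-η)·z^{(l,+)}_i and a^{(l,-)}_i = η·z^{(l,-)}_i + (1-η)·min(z^{(l,+)}_i, z^{(l,-)}_i). Then at every layer l, neuron i, and every η ∈ [0,1]: a^{(l,+)}_i - a^{(l,-)}_i = ReLU(z^{(l)}_i), the original ReLU network activation. -/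
open Finset

noncomputable section

/-- Positive part of a real number. -/
def pPart (u : ℝ) : ℝ := max u 0

/-- Negative part of a real number. -/
def nPart (u : ℝ) : ℝ := max (-u) 0

/-- Activations of a feedforward ReLU network. -/
def netAct (n : ℕ → ℕ) (W : ∀ l, Fin (n (l + 1)) → Fin (n l) → ℝ)
    (b : ∀ l, Fin (n (l + 1)) → ℝ) (x : Fin (n 0) → ℝ) : ∀ l, Fin (n l) → ℝ
  | 0 => x
  | (l + 1) => fun i => max (b l i + ∑ j, W l i j * netAct n W b x l j) 0

/-- Mixing-decomposition activation pairs with parameter `η ∈ [0,1]`: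
`a⁺ = η·max(z⁺,z⁻) + (1−η)·z⁺`, `a⁻ = η·z⁻ + (1−η)·min(z⁺,z⁻)`. -/
def mixPair (n : ℕ → ℕ) (W : ∀ l, Fin (n (l + 1)) → Fin (n l) → ℝ)
    (b : ∀ l, Fin (n (l + 1)) → ℝ) (η : ℝ) (x : Fin (n 0) → ℝ) :
    ∀ l, Fin (n l) → ℝ × ℝ
  | 0 => fun k => (pPart (x k), nPart (x k))
  | (l + 1) => fun i =>
      let zp := pPart (b l i) + ∑ j, (pPart (W l i j) * (mixPair n W b η x l j).1 +
        nPart (W l i j) * (mixPair n W b η x l j).2)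
      let zm := nPart (b l i) + ∑ j, (pPart (W l i j) * (mixPair n W b η x l j).2 +
        nPart (W l i j) * (mixPair n W b η x l j).1)
      (η * max zp zm + (1 - η) * zp, η * zm + (1 - η) * min zp zm)

/-- Layerwise recovery of the ReLU network by the Mixing decomposition, for every
`η ∈ [0,1]`: `a⁽ˡ'⁺'ᵑ⁾ᵢ − a⁽ˡ'⁻'ᵑ⁾ᵢ = ReLU(z⁽ˡ⁾ᵢ) = a⁽ˡ⁾ᵢ`. -/
theorem mixing_decomposition_recovery (n : ℕ → ℕ)
    (W : ∀ l, Fin (n (l + 1)) → Fin (n l) → ℝ)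
    (b : ∀ l, Fin (n (l + 1)) → ℝ) (x : Fin (n 0) → ℝ)
    (η : ℝ) (hη : η ∈ Set.Icc (0 : ℝ) 1) :
    ∀ l (i : Fin (n l)),
      (mixPair n W b η x l i).1 - (mixPair n W b η x l i).2 = netAct n W b x l i := by
  intro l
  induction l with
  | zero =>
    intro i
    simp [mixPair, netAct, pPart, nPart]
  | succ l ih =>
    intro i
    have key : ∀ u v : ℝ, η * max u v + (1 - η) * u - (η * v + (1 - η) * min u v)
        = max (u - v) 0 := by
      intro u v
      rcases le_total u v with h | h
      · rw [max_eq_right h, min_eq_left h, max_eq_right (by linarith : u - v ≤ 0)]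
        ring
      · rw [max_eq_left h, min_eq_right h, max_eq_left (by linarith : 0 ≤ u - v)]
        ring
    show (η * max _ _ + (1 - η) * _) - (η * _ + (1 - η) * min _ _) = _
    rw [key, netAct]
    congr 1
    have hb : pPart (b l i) - nPart (b l i) = b l i := by
      simp [pPart, nPart]
    have hsum : ∀ j : Fin (n l),
        (pPart (W l i j) * (mixPair n W b η x l j).1 + nPart (W l i j) * (mixPair n W b η x l j).2)
        - (pPart (W l i j) * (mixPair n W b η x l j).2 + nPart (W l i j) * (mixPair n W b η x l j).1)
        = W l i j * netAct n W b x l j := by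
      intro j
      have hw : pPart (W l i j) - nPart (W l i j) = W l i j := by
        simp [pPart, nPart]
      have := ih j
      linear_combination netAct n W b x l j * hw +
        (pPart (W l i j) - nPart (W l i j)) * this
    rw [show (pPart (b l i) + ∑ j, (pPart (W l i j) * (mixPair n W b η x l j).1 +
        nPart (W l i j) * (mixPair n W b η x l j).2)) -
        (nPart (b l i) + ∑ j, (pPart (W l i j) * (mixPair n W b η x l j).2 +
        nPart (W l i j) * (mixPair n W b η x l j).1)) =
        (pPart (b l i) - nPart (b l i)) + ∑ j,
        ((pPart (W l i j) * (mixPair n W b η x l j).1 + nPart (W l i j) * (mixPair n W b η x l j).2)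
        - (pPart (W l i j) * (mixPair n W b η x l j).2 + nPart (W l i j) * (mixPair n W b η x l j).1))
        from by rw [Finset.sum_sub_distrib]; ring]
    rw [hb]
    congr 1
    exact Finset.sum_congr rfl fun j _ => hsum j


end
end

section
/- In the η = 1 Mixing decomposition of a ReLU network with input convention a^{(0,±)}_k(x) = x_k^±, the decomposed activations a^{(l,+,1)}_i(x) = max(z^{(l,+)}_i(x), z^{(l,-)}_i(x)) and a^{(l,-,1)}_i(x) = z^{(l,-)}_i(x) are both convex functions of the network input x, at every layer l and neuron i. Consequently the network activation a^{(l)}_i = a^{(l,+,1)}_i - a^{(l,-,1)}_i is exhibited as a difference of convex functions. -/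
open Finset

noncomputable section

/-! At `η = 1` the recursion reads `a⁺ = max z⁺ z⁻`, `a⁻ = z⁻`, where `z^±` are affine
combinations of the previous layer's `a^±` with the nonnegative coefficients `W^±`, `b^±`.
Convexity therefore propagates from the convex input pair `(x_k⁺, x_k⁻)` through every layer,
while `a⁺ - a⁻ = max (z⁺ - z⁻) 0` with `z⁺ - z⁻ = b + W (a⁺ - a⁻)` is exactly the ReLU
recursion. -/

lemma pPart_sub_nPart (u : ℝ) : pPart u - nPart u = u := posPart_sub_negPart u

lemma convexOn_pPart : ConvexOn ℝ Set.univ pPart :=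
  (LinearMap.id.convexOn convex_univ).sup (convexOn_const 0 convex_univ)

lemma convexOn_nPart : ConvexOn ℝ Set.univ nPart :=
  ((-LinearMap.id).convexOn convex_univ).sup (convexOn_const 0 convex_univ)

lemma ConvexOn.sum {𝕜 E β ι : Type*} [Semiring 𝕜] [PartialOrder 𝕜] [AddCommMonoid E]
    [AddCommMonoid β] [PartialOrder β] [IsOrderedAddMonoid β] [SMul 𝕜 E] [Module 𝕜 β]
    {s : Set E} (hs : Convex 𝕜 s) (t : Finset ι) {f : ι → E → β}
    (hf : ∀ j ∈ t, ConvexOn 𝕜 s (f j)) : ConvexOn 𝕜 s fun x => ∑ j ∈ t, f j x := by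
  rw [← Finset.sum_fn]
  exact Finset.sum_induction f (ConvexOn 𝕜 s) (fun _ _ => ConvexOn.add) (convexOn_const 0 hs) hf

lemma convexOn_const_add_sum_pPart_mul_add_nPart_mul {E ι : Type*} [AddCommMonoid E]
    [Module ℝ E] [Fintype ι] (c : ℝ) (w : ι → ℝ) {f g : ι → E → ℝ}
    (hf : ∀ j, ConvexOn ℝ Set.univ (f j)) (hg : ∀ j, ConvexOn ℝ Set.univ (g j)) :
    ConvexOn ℝ Set.univ fun x => c + ∑ j, (pPart (w j) * f j x + nPart (w j) * g j x) :=
  (convexOn_const c convex_univ).add <| ConvexOn.sum convex_univ _ fun j _ =>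
    ((hf j).smul (posPart_nonneg (w j))).add ((hg j).smul (negPart_nonneg (w j)))

lemma pPart_add_sum_sub_nPart_add_sum (c : ℝ) {ι : Type*} (s : Finset ι) (w p q : ι → ℝ) :
    pPart c + ∑ j ∈ s, (pPart (w j) * p j + nPart (w j) * q j)
      - (nPart c + ∑ j ∈ s, (pPart (w j) * q j + nPart (w j) * p j))
      = c + ∑ j ∈ s, w j * (p j - q j) := by
  rw [add_sub_add_comm, ← Finset.sum_sub_distrib, pPart_sub_nPart]
  congr 1
  refine Finset.sum_congr rfl fun j _ => ?_
  linear_combination (p j - q j) * pPart_sub_nPart (w j)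

section MixPair

variable (n : ℕ → ℕ) (W : ∀ l, Fin (n (l + 1)) → Fin (n l) → ℝ) (b : ∀ l, Fin (n (l + 1)) → ℝ)

/-- The decomposed pre-activations `(z^{(l+1,+)}_i, z^{(l+1,-)}_i)`. -/
def mixPreAct (η : ℝ) (x : Fin (n 0) → ℝ) (l : ℕ) (i : Fin (n (l + 1))) : ℝ × ℝ :=
  (pPart (b l i) + ∑ j, (pPart (W l i j) * (mixPair n W b η x l j).1 +
      nPart (W l i j) * (mixPair n W b η x l j).2),
    nPart (b l i) + ∑ j, (pPart (W l i j) * (mixPair n W b η x l j).2 +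
      nPart (W l i j) * (mixPair n W b η x l j).1))

lemma mixPair_one_succ (x : Fin (n 0) → ℝ) (l : ℕ) (i : Fin (n (l + 1))) :
    mixPair n W b 1 x (l + 1) i =
      (max (mixPreAct n W b 1 x l i).1 (mixPreAct n W b 1 x l i).2,
        (mixPreAct n W b 1 x l i).2) := by
  simp [mixPair, mixPreAct]

lemma mixPreAct_fst_sub_snd (η : ℝ) (x : Fin (n 0) → ℝ) (l : ℕ) (i : Fin (n (l + 1))) :
    (mixPreAct n W b η x l i).1 - (mixPreAct n W b η x l i).2 =
      b l i + ∑ j, W l i j * ((mixPair n W b η x l j).1 - (mixPair n W b η x l j).2) :=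
  pPart_add_sum_sub_nPart_add_sum _ _ _ _ _

lemma mixPair_one_fst_sub_snd (x : Fin (n 0) → ℝ) :
    ∀ l i, (mixPair n W b 1 x l i).1 - (mixPair n W b 1 x l i).2 = netAct n W b x l i
  | 0, k => pPart_sub_nPart (x k)
  | l + 1, i => by
    rw [mixPair_one_succ, ← max_sub_sub_right, sub_self, mixPreAct_fst_sub_snd]
    simp only [mixPair_one_fst_sub_snd x l]
    rfl

lemma convexOn_mixPreAct {η : ℝ} {l : ℕ}
    (h : ∀ j, ConvexOn ℝ Set.univ (fun x => (mixPair n W b η x l j).1) ∧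
      ConvexOn ℝ Set.univ (fun x => (mixPair n W b η x l j).2)) (i : Fin (n (l + 1))) :
    ConvexOn ℝ Set.univ (fun x => (mixPreAct n W b η x l i).1) ∧
      ConvexOn ℝ Set.univ (fun x => (mixPreAct n W b η x l i).2) :=
  ⟨convexOn_const_add_sum_pPart_mul_add_nPart_mul _ _ (fun j => (h j).1) (fun j => (h j).2),
    convexOn_const_add_sum_pPart_mul_add_nPart_mul _ _ (fun j => (h j).2) (fun j => (h j).1)⟩

lemma convexOn_mixPair_one : ∀ l i,
    ConvexOn ℝ Set.univ (fun x => (mixPair n W b 1 x l i).1) ∧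
      ConvexOn ℝ Set.univ (fun x => (mixPair n W b 1 x l i).2)
  | 0, k =>
    let proj := LinearMap.proj (R := ℝ) (φ := fun _ : Fin (n 0) => ℝ) k
    ⟨convexOn_pPart.comp_linearMap proj, convexOn_nPart.comp_linearMap proj⟩
  | l + 1, i => by
    obtain ⟨hzp, hzm⟩ := convexOn_mixPreAct n W b (convexOn_mixPair_one l) i
    simp only [mixPair_one_succ]
    exact ⟨hzp.sup hzm, hzm⟩

end MixPair

/-- At `η = 1`, both Mixing-decomposition activations are convex functions of the network
input `x` at every layer and neuron; consequently the ReLU network activation is exhibited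
as a difference of convex functions. -/
theorem mixing_eta_one_convex (n : ℕ → ℕ)
    (W : ∀ l, Fin (n (l + 1)) → Fin (n l) → ℝ)
    (b : ∀ l, Fin (n (l + 1)) → ℝ) (l : ℕ) (i : Fin (n l)) :
    ConvexOn ℝ Set.univ (fun x : Fin (n 0) → ℝ => (mixPair n W b 1 x l i).1) ∧
    ConvexOn ℝ Set.univ (fun x : Fin (n 0) → ℝ => (mixPair n W b 1 x l i).2) ∧
    (∀ x : Fin (n 0) → ℝ,
      (mixPair n W b 1 x l i).1 - (mixPair n W b 1 x l i).2 = netAct n W b x l i) :=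
  ⟨(convexOn_mixPair_one n W b l i).1, (convexOn_mixPair_one n W b l i).2,
    fun x => mixPair_one_fst_sub_snd n W b x l i⟩

end
end
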